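/- arXiv:2101.03528 — 2 statements merged into one kernel-verified Lean document; each statement's English description precedes it below -/
import Mathlib

section
/- Let L be a coatomic logic. Then the semisimple companion L^σ is the largest logic with the same simple theories as L: the simple theories of L^σ are exactly the simple theories of L, and every logic L' (on the same formula algebra) whose simple theories coincide with those of L satisfies Γ ⊢_{L'} φ ⟹ Γ ⊢_{L^σ} φ for all Γ, φ. In particular, L^σ is coatomic. -/
/-!
`L ≤ L^σ`, and every simple theory of `L` is an `L^σ`-theory (take the identity substitution).
These two facts alone make the simple theories of `L` and `L^σ` coincide once `L` is coatomic:
an `L^σ`-simple theory is an `L`-theory, lies below an `L`-simple theory, and maximality forces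
equality. Maximality of `L^σ` is the remark that `Γ ⊢_{L'} φ` survives every substitution into
every theory of `L'`, in particular into every simple theory of `L`.
-/

set_option linter.unusedVariables false

open FirstOrder Set

universe u

/-- Substitution composition for terms of a first-order language. -/
theorem FirstOrder.Language.Term.subst_subst' {L : FirstOrder.Language.{u, u}} {α β γ : Type u}
    (t : L.Term α) (f : α → L.Term β) (g : β → L.Term γ) :
    (t.subst f).subst g = t.subst (fun i => (f i).subst g) := by
  induction t with
  | var => rfl
  | func f ts ih => simp only [Language.Term.subst, ih]

/-- A logic over the absolutely free algebra of `L`-terms in variables `Var`. -/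
structure Logic (L : FirstOrder.Language.{u, u}) (Var : Type u) where
  Deriv : Set (L.Term Var) → L.Term Var → Prop
  deriv_refl : ∀ φ : L.Term Var, Deriv {φ} φ
  deriv_mono : ∀ {Γ Δ : Set (L.Term Var)} {φ : L.Term Var}, Deriv Γ φ → Γ ⊆ Δ → Deriv Δ φ
  deriv_cut : ∀ {Γ Φ : Set (L.Term Var)} {φ : L.Term Var},
      (∀ ψ ∈ Φ, Deriv Γ ψ) → Deriv Φ φ → Deriv Γ φ
  deriv_subst : ∀ {Γ : Set (L.Term Var)} {φ : L.Term Var} (σ : Var → L.Term Var),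
      Deriv Γ φ → Deriv ((fun t => t.subst σ) '' Γ) (φ.subst σ)

namespace Logic

variable {L : FirstOrder.Language.{u, u}} {Var : Type u} (Lg : Logic L Var)

/-- `Γ ⊢ φ` for every `φ ∈ Δ`. -/
def DerivAll (Γ Δ : Set (L.Term Var)) : Prop := ∀ φ ∈ Δ, Lg.Deriv Γ φ

/-- `Γ ⊢ Fm`, i.e. `Γ` derives every formula. -/
def Inc (Γ : Set (L.Term Var)) : Prop := ∀ φ : L.Term Var, Lg.Deriv Γ φ

/-- A theory of the logic: a deductively closed set of formulas. -/
def IsTheory (T : Set (L.Term Var)) : Prop := ∀ φ : L.Term Var, Lg.Deriv T φ → φ ∈ T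

/-- A simple theory: a maximal non-trivial theory. -/
def IsSimple (T : Set (L.Term Var)) : Prop :=
  Lg.IsTheory T ∧ T ≠ univ ∧
    ∀ T' : Set (L.Term Var), Lg.IsTheory T' → T' ≠ univ → T ⊆ T' → T' = T

/-- A semisimple theory: an intersection of simple theories. -/
def IsSemisimple (T : Set (L.Term Var)) : Prop :=
  ∃ S : Set (Set (L.Term Var)), (∀ U ∈ S, Lg.IsSimple U) ∧ T = ⋂₀ S

/-- A semisimple logic: every theory is an intersection of simple theories. -/
def Semisimple : Prop := ∀ T : Set (L.Term Var), Lg.IsTheory T → Lg.IsSemisimple T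

/-- A coatomic logic: every non-trivial theory extends to a simple theory. -/
def Coatomic : Prop :=
  ∀ T : Set (L.Term Var), Lg.IsTheory T → T ≠ univ → ∃ U, Lg.IsSimple U ∧ T ⊆ U

/-- A matrix `⟨A, F⟩` is a model of the logic if the preimage of `F` under any
homomorphism (equivalently, the realization along any valuation) is a theory. -/
def IsModel (A : Type u) [L.Structure A] (F : Set A) : Prop :=
  ∀ v : Var → A, Lg.IsTheory {φ : L.Term Var | φ.realize v ∈ F}

/-- `Γ ⊢ ∅`: `Γ` cannot be jointly designated in any non-trivial model. -/
def Antitheorem (Γ : Set (L.Term Var)) : Prop :=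
  ∀ (A : Type u) [L.Structure A], ∀ F : Set A, Lg.IsModel A F → F ≠ univ →
    ∀ v : Var → A, ¬((fun φ : L.Term Var => φ.realize v) '' Γ ⊆ F)

/-- κ-compactness: every inconsistent set has an inconsistent subset of size `< κ`. -/
def Compact (κ : Cardinal.{u}) : Prop :=
  ∀ Γ : Set (L.Term Var), Lg.Inc Γ → ∃ Γ' ⊆ Γ, Cardinal.mk ↥Γ' < κ ∧ Lg.Inc Γ'

/-- κ-arity: any derivation uses fewer than κ premises. -/
def Ary (κ : Cardinal.{u}) : Prop :=
  ∀ (Γ : Set (L.Term Var)) (φ : L.Term Var), Lg.Deriv Γ φ →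
    ∃ Γ' ⊆ Γ, Cardinal.mk ↥Γ' < κ ∧ Lg.Deriv Γ' φ

end Logic

/-- A parametrized family: for each ordinal `α`, a family of sets of formulas in
`α`-many variable slots together with parameter slots (indexed by `Var`). -/
abbrev PFam (L : FirstOrder.Language.{u, u}) (Var : Type u) : Type (u + 1) :=
  ∀ α : Ordinal.{u}, Set (Set (L.Term (α.ToType ⊕ Var)))

/-- A local (parameter-free) family. -/
abbrev LFam (L : FirstOrder.Language.{u, u}) (Var : Type u) : Type (u + 1) :=
  ∀ α : Ordinal.{u}, Set (Set (L.Term α.ToType))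

/-- A global family: a single set of formulas for each ordinal `α`. -/
abbrev GFam (L : FirstOrder.Language.{u, u}) (Var : Type u) : Type (u + 1) :=
  ∀ α : Ordinal.{u}, Set (L.Term α.ToType)

namespace Logic

variable {L : FirstOrder.Language.{u, u}} {Var : Type u}

/-- `I(φ̄, π̄)`: instantiation of a parametrized set of formulas. -/
def pInst {α : Ordinal.{u}} (I : Set (L.Term (α.ToType ⊕ Var)))
    (phis : α.ToType → L.Term Var) (pis : Var → L.Term Var) : Set (L.Term Var) :=
  (fun t => t.subst (Sum.elim phis pis)) '' I

/-- `I(φ̄)`: instantiation of a parameter-free set of formulas. -/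
def lInst {α : Ordinal.{u}} (I : Set (L.Term α.ToType))
    (phis : α.ToType → L.Term Var) : Set (L.Term Var) :=
  (fun t => t.subst phis) '' I

variable (Lg : Logic L Var)

/-- The κ-ary parametrized local inconsistency lemma w.r.t. the family `Ψ`. -/
def ParamLocalIL (κ : Cardinal.{u}) (Ψ : PFam L Var) : Prop :=
  ∀ α : Ordinal.{u}, 0 < α → α < κ.ord →
    ∀ (Γ : Set (L.Term Var)) (phis : α.ToType → L.Term Var),
      Lg.Inc (Γ ∪ range phis) ↔
        ∃ I ∈ Ψ α, ∃ pis : Var → L.Term Var, Lg.DerivAll Γ (pInst I phis pis)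

/-- The κ-ary local inconsistency lemma w.r.t. the family `Ψ`. -/
def LocalIL (κ : Cardinal.{u}) (Ψ : LFam L Var) : Prop :=
  ∀ α : Ordinal.{u}, 0 < α → α < κ.ord →
    ∀ (Γ : Set (L.Term Var)) (phis : α.ToType → L.Term Var),
      Lg.Inc (Γ ∪ range phis) ↔ ∃ I ∈ Ψ α, Lg.DerivAll Γ (lInst I phis)

/-- The κ-ary global inconsistency lemma w.r.t. the family `Ψ`. -/
def GlobalIL (κ : Cardinal.{u}) (Ψ : GFam L Var) : Prop :=
  Lg.LocalIL κ (fun α => {Ψ α})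

/-- The κ-ary dual parametrized local inconsistency lemma w.r.t. the family `Ψ`. -/
def DualParamLocalIL (κ : Cardinal.{u}) (Ψ : PFam L Var) : Prop :=
  ∀ α : Ordinal.{u}, 0 < α → α < κ.ord →
    ∀ (Γ : Set (L.Term Var)) (phis : α.ToType → L.Term Var),
      (∀ i, Lg.Deriv Γ (phis i)) ↔
        ∀ I ∈ Ψ α, ∀ pis : Var → L.Term Var, Lg.Inc (Γ ∪ pInst I phis pis)

/-- The κ-ary dual local inconsistency lemma w.r.t. the family `Ψ`. -/
def DualLocalIL (κ : Cardinal.{u}) (Ψ : LFam L Var) : Prop :=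
  ∀ α : Ordinal.{u}, 0 < α → α < κ.ord →
    ∀ (Γ : Set (L.Term Var)) (phis : α.ToType → L.Term Var),
      (∀ i, Lg.Deriv Γ (phis i)) ↔ ∀ I ∈ Ψ α, Lg.Inc (Γ ∪ lInst I phis)

/-- The κ-ary dual global inconsistency lemma w.r.t. the family `Ψ`. -/
def DualGlobalIL (κ : Cardinal.{u}) (Ψ : GFam L Var) : Prop :=
  Lg.DualLocalIL κ (fun α => {Ψ α})

/-- The κ-ary classical parametrized local IL: both the ordinary and dual IL. -/
def ClassicalParamLocalIL (κ : Cardinal.{u}) (Ψ : PFam L Var) : Prop :=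
  Lg.ParamLocalIL κ Ψ ∧ Lg.DualParamLocalIL κ Ψ

/-- The κ-ary classical local IL: both the ordinary and dual IL. -/
def ClassicalLocalIL (κ : Cardinal.{u}) (Ψ : LFam L Var) : Prop :=
  Lg.LocalIL κ Ψ ∧ Lg.DualLocalIL κ Ψ

/-- The κ-ary classical global IL: both the ordinary and dual IL. -/
def ClassicalGlobalIL (κ : Cardinal.{u}) (Ψ : GFam L Var) : Prop :=
  Lg.GlobalIL κ Ψ ∧ Lg.DualGlobalIL κ Ψ

/-- The κ-ary parametrized local law of the excluded middle w.r.t. `Ψ`. -/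
def ParamLocalLEM (κ : Cardinal.{u}) (Ψ : PFam L Var) : Prop :=
  (∀ α : Ordinal.{u}, 0 < α → α < κ.ord → ∀ I ∈ Ψ α,
    ∀ (phis : α.ToType → L.Term Var) (pis : Var → L.Term Var),
      Lg.Inc (range phis ∪ pInst I phis pis)) ∧
  (∀ α : Ordinal.{u}, 0 < α → α < κ.ord →
    ∀ (Γ : Set (L.Term Var)) (phis : α.ToType → L.Term Var) (ψ : L.Term Var),
      Lg.Deriv (Γ ∪ range phis) ψ →
      (∀ I ∈ Ψ α, ∀ pis : Var → L.Term Var, Lg.Deriv (Γ ∪ pInst I phis pis) ψ) →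
      Lg.Deriv Γ ψ)

/-- The κ-ary local law of the excluded middle w.r.t. `Ψ`. -/
def LocalLEM (κ : Cardinal.{u}) (Ψ : LFam L Var) : Prop :=
  (∀ α : Ordinal.{u}, 0 < α → α < κ.ord → ∀ I ∈ Ψ α,
    ∀ phis : α.ToType → L.Term Var, Lg.Inc (range phis ∪ lInst I phis)) ∧
  (∀ α : Ordinal.{u}, 0 < α → α < κ.ord →
    ∀ (Γ : Set (L.Term Var)) (phis : α.ToType → L.Term Var) (ψ : L.Term Var),
      Lg.Deriv (Γ ∪ range phis) ψ →
      (∀ I ∈ Ψ α, Lg.Deriv (Γ ∪ lInst I phis) ψ) → Lg.Deriv Γ ψ)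

/-- The κ-ary simple parametrized local IL w.r.t. `Ψ`. -/
def SimpleParamLocalIL (κ : Cardinal.{u}) (Ψ : PFam L Var) : Prop :=
  (∀ α : Ordinal.{u}, 0 < α → α < κ.ord → ∀ I ∈ Ψ α,
    ∀ (phis : α.ToType → L.Term Var) (pis : Var → L.Term Var),
      Lg.Inc (range phis ∪ pInst I phis pis)) ∧
  (∀ α : Ordinal.{u}, 0 < α → α < κ.ord →
    ∀ T : Set (L.Term Var), Lg.IsSimple T → ∀ phis : α.ToType → L.Term Var,
      Lg.Inc (T ∪ range phis) →
        ∃ I ∈ Ψ α, ∃ pis : Var → L.Term Var, Lg.DerivAll T (pInst I phis pis))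

/-- The κ-ary simple local IL w.r.t. `Ψ`. -/
def SimpleLocalIL (κ : Cardinal.{u}) (Ψ : LFam L Var) : Prop :=
  (∀ α : Ordinal.{u}, 0 < α → α < κ.ord → ∀ I ∈ Ψ α,
    ∀ phis : α.ToType → L.Term Var, Lg.Inc (range phis ∪ lInst I phis)) ∧
  (∀ α : Ordinal.{u}, 0 < α → α < κ.ord →
    ∀ T : Set (L.Term Var), Lg.IsSimple T → ∀ phis : α.ToType → L.Term Var,
      Lg.Inc (T ∪ range phis) → ∃ I ∈ Ψ α, Lg.DerivAll T (lInst I phis))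

end Logic

/-- Family for the parametrized local DDT: sets of formulas `I(p̄, q, r̄)`. -/
abbrev PFamD (L : FirstOrder.Language.{u, u}) (Var : Type u) : Type (u + 1) :=
  ∀ α : Ordinal.{u}, Set (Set (L.Term (α.ToType ⊕ (PUnit.{u + 1} ⊕ Var))))

/-- Family for the local DDT: sets of formulas `I(p̄, q)`. -/
abbrev LFamD (L : FirstOrder.Language.{u, u}) (Var : Type u) : Type (u + 1) :=
  ∀ α : Ordinal.{u}, Set (Set (L.Term (α.ToType ⊕ PUnit.{u + 1})))

/-- Family for the global DDT: a single set `I(p̄, q)` for each `α`. -/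
abbrev GFamD (L : FirstOrder.Language.{u, u}) (Var : Type u) : Type (u + 1) :=
  ∀ α : Ordinal.{u}, Set (L.Term (α.ToType ⊕ PUnit.{u + 1}))

namespace Logic

variable {L : FirstOrder.Language.{u, u}} {Var : Type u}

/-- `I(φ̄, ψ)`: instantiation of a DDT set of formulas. -/
def dInst {α : Ordinal.{u}} (I : Set (L.Term (α.ToType ⊕ PUnit.{u + 1})))
    (phis : α.ToType → L.Term Var) (ψ : L.Term Var) : Set (L.Term Var) :=
  (fun t => t.subst (Sum.elim phis (fun _ => ψ))) '' I

/-- `I(φ̄, ψ, π̄)`: instantiation of a parametrized DDT set of formulas. -/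
def pdInst {α : Ordinal.{u}} (I : Set (L.Term (α.ToType ⊕ (PUnit.{u + 1} ⊕ Var))))
    (phis : α.ToType → L.Term Var) (ψ : L.Term Var) (pis : Var → L.Term Var) :
    Set (L.Term Var) :=
  (fun t => t.subst (Sum.elim phis (Sum.elim (fun _ => ψ) pis))) '' I

variable (Lg : Logic L Var)

/-- The κ-ary local deduction--detachment theorem w.r.t. `Φ`. -/
def LocalDDT (κ : Cardinal.{u}) (Φ : LFamD L Var) : Prop :=
  ∀ α : Ordinal.{u}, 0 < α → α < κ.ord →
    ∀ (Γ : Set (L.Term Var)) (phis : α.ToType → L.Term Var) (ψ : L.Term Var),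
      Lg.Deriv (Γ ∪ range phis) ψ ↔ ∃ I ∈ Φ α, Lg.DerivAll Γ (dInst I phis ψ)

/-- The κ-ary global deduction--detachment theorem w.r.t. `Φ`. -/
def GlobalDDT (κ : Cardinal.{u}) (Φ : GFamD L Var) : Prop :=
  Lg.LocalDDT κ (fun α => {Φ α})

/-- The κ-ary parametrized local deduction--detachment theorem w.r.t. `Φ`. -/
def ParamLocalDDT (κ : Cardinal.{u}) (Φ : PFamD L Var) : Prop :=
  ∀ α : Ordinal.{u}, 0 < α → α < κ.ord →
    ∀ (Γ : Set (L.Term Var)) (phis : α.ToType → L.Term Var) (ψ : L.Term Var),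
      Lg.Deriv (Γ ∪ range phis) ψ ↔
        ∃ I ∈ Φ α, ∃ pis : Var → L.Term Var, Lg.DerivAll Γ (pdInst I phis ψ pis)

/-- A protoimplication set: a set `Δ(p, q)` of formulas in two variables with
`∅ ⊢ Δ(p, p)` and `p, Δ(p, q) ⊢ q` (stated via all instances, by structurality). -/
def HasProtoimplication : Prop :=
  ∃ Δ : Set (L.Term (ULift.{u} Bool)),
    (∀ φ : L.Term Var,
      Lg.DerivAll ∅ ((fun t => t.subst (fun _ => φ)) '' Δ)) ∧
    (∀ φ ψ : L.Term Var,
      Lg.Deriv (insert φ ((fun t => t.subst (fun b => if b.down then ψ else φ)) '' Δ)) ψ)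

/-- A rule `Γ ⊢ φ̄` is antiadmissible: substitution instances preserve
inconsistency in every context. -/
def Antiadmissible {ι : Type u} (Γ : Set (L.Term Var)) (phis : ι → L.Term Var) : Prop :=
  ∀ (σ : Var → L.Term Var) (Δ : Set (L.Term Var)),
    Lg.Inc (range (fun i => (phis i).subst σ) ∪ Δ) →
    Lg.Inc ((fun t => t.subst σ) '' Γ ∪ Δ)

/-- The semisimple companion of a logic: the logic determined by the
simple theories of `Lg`. -/
def companion (Lg : Logic L Var) : Logic L Var where
  Deriv Γ φ := ∀ T : Set (L.Term Var), Lg.IsSimple T →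
    ∀ σ : Var → L.Term Var, (fun t => t.subst σ) '' Γ ⊆ T → φ.subst σ ∈ T
  deriv_refl := by
    intro φ T _ σ h
    exact h ⟨φ, rfl, rfl⟩
  deriv_mono := by
    intro Γ Δ φ hΓ hsub T hT σ h
    exact hΓ T hT σ (fun x hx => h ((Set.image_mono hsub) hx))
  deriv_cut := by
    intro Γ Φ φ hΓ hΦ T hT σ h
    refine hΦ T hT σ ?_
    rintro x ⟨ψ, hψ, rfl⟩
    exact hΓ ψ hψ T hT σ h
  deriv_subst := by
    intro Γ φ σ hΓ T hT τ h
    rw [FirstOrder.Language.Term.subst_subst']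
    refine hΓ T hT (fun v => (σ v).subst τ) ?_
    rintro x ⟨ψ, hψ, rfl⟩
    show (ψ.subst fun v => (σ v).subst τ) ∈ T
    rw [← FirstOrder.Language.Term.subst_subst']
    exact h ⟨ψ.subst σ, ⟨ψ, hψ, rfl⟩, rfl⟩

/-- Equivalence of two parametrized IL families, stated through all of their
instances (which, by structurality, is equivalent to the schematic entailments
`I(p̄, q̄) ⊢ I'(p̄, π̄')`). -/
def FamEquiv (Lg : Logic L Var) (κ : Cardinal.{u}) (Ψ Ψ' : PFam L Var) : Prop :=
  (∀ α : Ordinal.{u}, 0 < α → α < κ.ord →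
    ∀ I ∈ Ψ α, ∃ I' ∈ Ψ' α, ∃ pis' : Var → L.Term (α.ToType ⊕ Var),
      ∀ (phis : α.ToType → L.Term Var) (rhos : Var → L.Term Var),
        Lg.DerivAll (pInst I phis rhos)
          (pInst I' phis (fun v => (pis' v).subst (Sum.elim phis rhos)))) ∧
  (∀ α : Ordinal.{u}, 0 < α → α < κ.ord →
    ∀ I' ∈ Ψ' α, ∃ I ∈ Ψ α, ∃ pis : Var → L.Term (α.ToType ⊕ Var),
      ∀ (phis : α.ToType → L.Term Var) (rhos : Var → L.Term Var),
        Lg.DerivAll (pInst I' phis rhos)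
          (pInst I phis (fun v => (pis v).subst (Sum.elim phis rhos))))

end Logic

theorem FirstOrder.Language.Term.subst_var {L : FirstOrder.Language.{u, u}} {α : Type u} (t : L.Term α) :
    t.subst Language.Term.var = t := by
  induction t with
  | var => rfl
  | func f ts ih => simp only [Language.Term.subst, ih]

namespace Logic

variable {L : FirstOrder.Language.{u, u}} {Var : Type u}

instance : LE (Logic L Var) :=
  ⟨fun Lg Lg' => ∀ Γ φ, Lg.Deriv Γ φ → Lg'.Deriv Γ φ⟩

variable {Lg Lg' : Logic L Var}

theorem IsTheory.of_le (hle : Lg ≤ Lg') {T : Set (L.Term Var)} (hT : Lg'.IsTheory T) :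
    Lg.IsTheory T :=
  fun φ hφ => hT φ (hle _ _ hφ)

theorem isSimple_iff_of_le (hco : Lg.Coatomic) (hle : Lg ≤ Lg')
    (hsimple : ∀ T, Lg.IsSimple T → Lg'.IsTheory T) (T : Set (L.Term Var)) :
    Lg'.IsSimple T ↔ Lg.IsSimple T := by
  constructor
  · rintro ⟨hT, hne, hmax⟩
    obtain ⟨U, hU, hTU⟩ := hco T (hT.of_le hle) hne
    rwa [← hmax U (hsimple U hU) hU.2.1 hTU]
  · intro hT
    exact ⟨hsimple T hT, hT.2.1, fun T' hT' hne hTT' => hT.2.2 T' (hT'.of_le hle) hne hTT'⟩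

theorem Coatomic.of_le (hco : Lg.Coatomic) (hle : Lg ≤ Lg')
    (hsimple : ∀ T, Lg.IsSimple T → Lg'.IsTheory T) : Lg'.Coatomic := by
  intro T hT hne
  obtain ⟨U, hU, hTU⟩ := hco T (hT.of_le hle) hne
  exact ⟨U, (isSimple_iff_of_le hco hle hsimple U).2 hU, hTU⟩

theorem le_companion_of_isTheory (h : ∀ T, Lg.IsSimple T → Lg'.IsTheory T) :
    Lg' ≤ Lg.companion :=
  fun _ _ hd T hT σ hσ => h T hT _ (Lg'.deriv_mono (Lg'.deriv_subst σ hd) hσ)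

theorem le_companion : Lg ≤ Lg.companion :=
  le_companion_of_isTheory fun _ hT => hT.1

theorem IsSimple.isTheory_companion {T : Set (L.Term Var)} (hT : Lg.IsSimple T) :
    Lg.companion.IsTheory T := by
  intro φ hφ
  have hT_id : (fun t => t.subst Language.Term.var) '' T = T := by
    simp only [Language.Term.subst_var, Set.image_id']
  simpa only [Language.Term.subst_var] using hφ T hT Language.Term.var hT_id.subset

end Logic

/-- for a coatomic logic `L`, the semisimple companion is the
largest logic with the same simple theories as `L`, and it is coatomic. -/
theorem statement_14 {L : FirstOrder.Language.{u, u}} {Var : Type u} (Lg : Logic L Var) (hco : Lg.Coatomic) :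
    (∀ T : Set (L.Term Var), (Lg.companion).IsSimple T ↔ Lg.IsSimple T) ∧
    (∀ Lg' : Logic L Var, (∀ T : Set (L.Term Var), Lg'.IsSimple T ↔ Lg.IsSimple T) →
      ∀ (Γ : Set (L.Term Var)) (φ : L.Term Var), Lg'.Deriv Γ φ → (Lg.companion).Deriv Γ φ) ∧
    (Lg.companion).Coatomic :=
  have hsimple : ∀ T, Lg.IsSimple T → Lg.companion.IsTheory T := fun _ hT => hT.isTheory_companion
  ⟨Logic.isSimple_iff_of_le hco Logic.le_companion hsimple,
    fun _ hsame => Logic.le_companion_of_isTheory fun T hT => ((hsame T).2 hT).1,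
    hco.of_le Logic.le_companion hsimple⟩
end

section
/- Let L be a coatomic logic and let L' be an extension of L (i.e., Γ ⊢_L φ implies Γ ⊢_{L'} φ). Then L and L' have the same simple theories if and only if for every Γ ⊆ Fm: Γ ⊢_L Fm ⟺ Γ ⊢_{L'} Fm. -/
set_option linter.unusedVariables false

open FirstOrder Set

universe u

/-!
In a coatomic logic a set `Γ` is inconsistent exactly when it lies in no simple theory, so equal
simple theories force equal inconsistent sets. Conversely, a simple theory `T`
is characterised by inconsistency alone: `T` is consistent while `T ∪ {φ}` is inconsistent for
every `φ ∉ T`. Hence, if `L` and `L'` agree on inconsistency, every `L`-simple theory is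
`L'`-simple, and an `L'`-simple theory `T` is contained in an `L`-simple theory `U` (coatomicity),
which is `L'`-simple and therefore equal to `T`.
-/

namespace Logic

variable {L : FirstOrder.Language.{u, u}} {Var : Type u} {Lg Lg' : Logic L Var}
  {Γ Δ T : Set (L.Term Var)} {φ : L.Term Var}

theorem deriv_of_mem (h : φ ∈ Γ) : Lg.Deriv Γ φ :=
  Lg.deriv_mono (Lg.deriv_refl φ) (singleton_subset_iff.mpr h)

theorem isTheory_setOf_deriv (Γ : Set (L.Term Var)) : Lg.IsTheory {ψ | Lg.Deriv Γ ψ} :=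
  fun _ h => Lg.deriv_cut (fun _ hψ => hψ) h

theorem Inc.mono (h : Lg.Inc Γ) (hΓΔ : Γ ⊆ Δ) : Lg.Inc Δ :=
  fun ψ => Lg.deriv_mono (h ψ) hΓΔ

theorem Inc.of_insert (h : Lg.Inc (insert φ Γ)) (hφ : Lg.Deriv Γ φ) : Lg.Inc Γ :=
  fun ψ => Lg.deriv_cut (by rintro χ (rfl | hχ); exacts [hφ, deriv_of_mem hχ]) (h ψ)

theorem IsTheory.eq_univ_of_inc (hT : Lg.IsTheory T) (h : Lg.Inc T) : T = univ :=
  eq_univ_of_forall fun ψ => hT ψ (h ψ)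

theorem Coatomic.exists_isSimple_superset (hco : Lg.Coatomic) (h : ¬Lg.Inc Γ) :
    ∃ U, Lg.IsSimple U ∧ Γ ⊆ U := by
  obtain ⟨U, hU, hsub⟩ :=
    hco _ (isTheory_setOf_deriv Γ) fun he => h (eq_univ_iff_forall.mp he)
  exact ⟨U, hU, fun ψ hψ => hsub (deriv_of_mem hψ)⟩

theorem IsSimple.inc_insert (hT : Lg.IsSimple T) (hφ : φ ∉ T) : Lg.Inc (insert φ T) := by
  by_contra h
  have hclosure : {ψ | Lg.Deriv (insert φ T) ψ} = T :=
    hT.2.2 _ (isTheory_setOf_deriv _) (fun he => h (eq_univ_iff_forall.mp he))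
      fun ψ hψ => deriv_of_mem (mem_insert_of_mem φ hψ)
  exact hφ (hclosure ▸ deriv_of_mem (mem_insert φ T))

theorem inc_of_inc_of_isSimple_imp (hco : Lg.Coatomic)
    (hsimp : ∀ T, Lg.IsSimple T → Lg'.IsSimple T) (h : Lg'.Inc Γ) : Lg.Inc Γ := by
  by_contra hΓ
  obtain ⟨U, hU, hΓU⟩ := hco.exists_isSimple_superset hΓ
  have hU' := hsimp U hU
  exact hU'.2.1 (hU'.1.eq_univ_of_inc (h.mono hΓU))

theorem IsSimple.of_extension (hext : ∀ Γ φ, Lg.Deriv Γ φ → Lg'.Deriv Γ φ)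
    (hinc : ∀ Γ, Lg'.Inc Γ → Lg.Inc Γ) (hT : Lg.IsSimple T) : Lg'.IsSimple T := by
  have hcons : ¬Lg'.Inc T := fun h => hT.2.1 (hT.1.eq_univ_of_inc (hinc T h))
  have hinsert : ∀ φ ∉ T, Lg'.Inc (insert φ T) :=
    fun φ hφ ψ => hext _ _ (hT.inc_insert hφ ψ)
  refine ⟨fun φ hφ => ?_, hT.2.1, fun T' hT' hT'ne hTT' => ?_⟩
  · by_contra hφT
    exact hcons ((hinsert φ hφT).of_insert hφ)
  · refine subset_antisymm (fun φ hφ => ?_) hTT'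
    by_contra hφT
    exact hT'ne (hT'.eq_univ_of_inc ((hinsert φ hφT).mono (insert_subset hφ hTT')))

theorem IsSimple.of_extension_of_coatomic (hco : Lg.Coatomic)
    (hext : ∀ Γ φ, Lg.Deriv Γ φ → Lg'.Deriv Γ φ)
    (hsimp : ∀ T, Lg.IsSimple T → Lg'.IsSimple T) (hT : Lg'.IsSimple T) : Lg.IsSimple T := by
  have hth : Lg.IsTheory T := fun φ h => hT.1 φ (hext _ _ h)
  obtain ⟨U, hU, hTU⟩ := hco T hth hT.2.1
  have hU' := hsimp U hU
  exact hT.2.2 U hU'.1 hU'.2.1 hTU ▸ hU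

end Logic

/-- an extension `L'` of a coatomic logic `L` has the same simple
theories as `L` iff it has the same inconsistent sets as `L`. -/
theorem statement_15 {L : FirstOrder.Language.{u, u}} {Var : Type u} (Lg Lg' : Logic L Var) (hco : Lg.Coatomic)
    (hext : ∀ (Γ : Set (L.Term Var)) (φ : L.Term Var), Lg.Deriv Γ φ → Lg'.Deriv Γ φ) :
    (∀ T : Set (L.Term Var), Lg.IsSimple T ↔ Lg'.IsSimple T) ↔
      (∀ Γ : Set (L.Term Var), Lg.Inc Γ ↔ Lg'.Inc Γ) := by
  constructor
  · intro hsimp Γ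
    exact ⟨fun h φ => hext _ _ (h φ),
      Logic.inc_of_inc_of_isSimple_imp hco fun T => (hsimp T).mp⟩
  · intro hinc
    have hsimp : ∀ T, Lg.IsSimple T → Lg'.IsSimple T :=
      fun T => Logic.IsSimple.of_extension hext fun Γ => (hinc Γ).mpr
    exact fun T => ⟨hsimp T, Logic.IsSimple.of_extension_of_coatomic hco hext hsimp⟩
end
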